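/- arXiv:1612.02526 — 3 statements merged into one kernel-verified Lean document; each statement's English description precedes it below -/
import Mathlib

section
/- Consider an HMM with n hidden states whose hidden state at time 0 is drawn from a distribution π, and denote the observation at time s by x_s. Let OPT_s denote the conditional distribution of x_s given observations x_0,…,x_{s−1} and knowledge of the true hidden state h_0 at time 0, and let M_s denote the conditional distribution of x_s given only x_0,…,x_{s−1} (with h_0 ∼ π). Fix c ≥ 1 and ε ≥ 1/(log n)^{1/4} with ε > 1/n, and set ℓ = c·log n / ε². If the true hidden state h_0 satisfies π(h_0) ≥ 1/n^c, then E[ Σ_{s=0}^{ℓ−1} ‖OPT_s − M_s‖₁ ] ≤ 4 ε ℓ, where the expectation is over the randomness of the outputs x_0,…,x_{ℓ−1} (conditioned on the true initial state being h_0). -/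
open Finset Real
open scoped Classical

/-- Probability of an event under a weight function on a finite sample space. -/
noncomputable def pr {Ω : Type*} [Fintype Ω] (p : Ω → ℝ) (E : Ω → Prop) : ℝ :=
  ∑ ω, if E ω then p ω else 0

/-- Conditional distribution of a random variable `X` given an event `E`. -/
noncomputable def condDist {Ω A : Type*} [Fintype Ω] (p : Ω → ℝ)
    (X : Ω → A) (E : Ω → Prop) : A → ℝ :=
  fun a => pr p (fun ω => X ω = a ∧ E ω) / pr p E

/-- ℓ1 distance between two distributions on a finite alphabet. -/
noncomputable def l1Dist {A : Type*} [Fintype A] (f g : A → ℝ) : ℝ :=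
  ∑ a, |f a - g a|

/-- A Hidden Markov Model with hidden state space `S` and output alphabet `A`. -/
structure HMM (S A : Type*) [Fintype S] [Fintype A] where
  init : S → ℝ
  init_nonneg : ∀ s, 0 ≤ init s
  init_sum : ∑ s, init s = 1
  trans : S → S → ℝ
  trans_nonneg : ∀ s s', 0 ≤ trans s s'
  trans_sum : ∀ s, ∑ s', trans s s' = 1
  emit : S → A → ℝ
  emit_nonneg : ∀ s a, 0 ≤ emit s a
  emit_sum : ∀ s, ∑ a, emit s a = 1

/-- The joint probability the HMM assigns to a trajectory of hidden states and outputs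
at times `0, 1, …, T`. -/
noncomputable def hmmWeight {S A : Type*} [Fintype S] [Fintype A] (M : HMM S A) (T : ℕ) :
    ((Fin (T + 1) → S) × (Fin (T + 1) → A)) → ℝ :=
  fun ω => M.init (ω.1 0) * (∏ i : Fin T, M.trans (ω.1 i.castSucc) (ω.1 i.succ)) *
    ∏ i : Fin (T + 1), M.emit (ω.1 i) (ω.2 i)

/-- The output `x_t` of an HMM trajectory with horizon `T` (for `t ≤ T`). -/
def obs {S A : Type*} (T : ℕ) (t : ℕ) (ω : (Fin (T + 1) → S) × (Fin (T + 1) → A)) : A :=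
  ω.2 ⟨t % (T + 1), Nat.mod_lt _ (Nat.succ_pos T)⟩

/-- The hidden state `h_t` of an HMM trajectory with horizon `T` (for `t ≤ T`). -/
def hid {S A : Type*} (T : ℕ) (t : ℕ) (ω : (Fin (T + 1) → S) × (Fin (T + 1) → A)) : S :=
  ω.1 ⟨t % (T + 1), Nat.mod_lt _ (Nat.succ_pos T)⟩

/-!
Let `q` be the trajectory weight restricted to `{h₀ = h}`, of mass `W = π(h) ≥ n^(-c)`, and `p`
the full weight. By the chain rule, the `q`-expected KL divergences between the laws of `x_s`
given the past under `q` and under `p`, summed over `s < ℓ`, telescope to at most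
`W log (1 / W) ≤ W c log n = W ℓ ε²`. Pinsker's inequality (in the weak form `‖f - g‖₁ ≤ 2√KL`,
through the Hellinger distance) and Cauchy–Schwarz, over trajectories and over `s`, turn this
into the bound `2 W √(ℓ · ℓ ε²) = 2 W ε ℓ` on the unnormalised expected regret.
-/

section Probability

variable {Ω A : Type*} [Fintype Ω]

lemma pr_nonneg {p : Ω → ℝ} (hp : ∀ ω, 0 ≤ p ω) (E : Ω → Prop) : 0 ≤ pr p E :=
  sum_nonneg fun ω _ => by split_ifs <;> simp [hp ω]

lemma pr_congr (p : Ω → ℝ) {E F : Ω → Prop} (h : ∀ ω, E ω ↔ F ω) : pr p E = pr p F := by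
  simp only [pr, h]

lemma pr_le_pr {p q : Ω → ℝ} (hq : ∀ ω, 0 ≤ q ω) (hqp : ∀ ω, q ω ≤ p ω) {E F : Ω → Prop}
    (hEF : ∀ ω, E ω → F ω) : pr q E ≤ pr p F :=
  sum_le_sum fun ω _ => by
    by_cases hE : E ω
    · simp [hE, hEF ω hE, hqp ω]
    · simp only [hE, if_false]
      split_ifs
      exacts [(hq ω).trans (hqp ω), le_rfl]

lemma le_pr {p : Ω → ℝ} (hp : ∀ ω, 0 ≤ p ω) {E : Ω → Prop} {ω : Ω} (hω : E ω) :
    p ω ≤ pr p E :=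
  (if_pos hω).symm.le.trans <| single_le_sum (f := fun ω => if E ω then p ω else 0)
    (fun ω _ => by split_ifs <;> simp [hp ω]) (mem_univ ω)

lemma pr_ite (p : Ω → ℝ) (E F : Ω → Prop) :
    pr (fun ω => if F ω then p ω else 0) E = pr p (fun ω => E ω ∧ F ω) := by
  refine sum_congr rfl fun ω _ => ?_
  by_cases hE : E ω <;> simp [hE]

lemma condDist_ite (p : Ω → ℝ) (X : Ω → A) (E F : Ω → Prop) :
    condDist (fun ω => if F ω then p ω else 0) X E = condDist p X (fun ω => E ω ∧ F ω) := by
  ext a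
  simp only [condDist, pr_ite, and_assoc]

lemma condDist_nonneg {p : Ω → ℝ} (hp : ∀ ω, 0 ≤ p ω) (X : Ω → A) (E : Ω → Prop) (a : A) :
    0 ≤ condDist p X E a :=
  div_nonneg (pr_nonneg hp _) (pr_nonneg hp _)

lemma sum_condDist_mul [Fintype A] (p : Ω → ℝ) (X : Ω → A) (E : Ω → Prop) (G : A → ℝ) :
    ∑ a, condDist p X E a * G a = (∑ ω, if E ω then p ω * G (X ω) else 0) / pr p E := by
  simp only [condDist, pr, div_mul_eq_mul_div, ← sum_div, sum_mul]
  rw [sum_comm]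
  congr 1
  refine sum_congr rfl fun ω _ => ?_
  by_cases hE : E ω <;> simp [hE]

lemma sum_condDist [Fintype A] (p : Ω → ℝ) (X : Ω → A) {E : Ω → Prop} (hE : pr p E ≠ 0) :
    ∑ a, condDist p X E a = 1 := by
  have h := sum_condDist_mul p X E 1
  simp only [Pi.one_apply, mul_one] at h
  exact h.trans (div_self hE)

lemma condDist_eq_zero_of_condDist_eq_zero {p q : Ω → ℝ} (hq : ∀ ω, 0 ≤ q ω)
    (hqp : ∀ ω, q ω ≤ p ω) (X : Ω → A) (E : Ω → Prop) {a : A} (ha : condDist p X E a = 0) :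
    condDist q X E a = 0 := by
  rcases div_eq_zero_iff.1 ha with h | h
  · have := pr_le_pr hq hqp (E := fun ω => X ω = a ∧ E ω) fun _ => id
    simp [condDist, le_antisymm (h ▸ this) (pr_nonneg hq _)]
  · have := pr_le_pr hq hqp (E := E) fun _ => id
    simp [condDist, le_antisymm (h ▸ this) (pr_nonneg hq _)]

/-- The tower property `E[E[F(Y, X) | Y]] = E[F(Y, X)]`, for an unnormalised weight `q`. -/
lemma sum_mul_sum_condDist_mul [Fintype A] {B : Type*} {q : Ω → ℝ} (hq : ∀ ω, 0 ≤ q ω)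
    (X : Ω → A) (Y : Ω → B) (F : B → A → ℝ) :
    ∑ ω, q ω * ∑ a, condDist q X (fun ω' => Y ω' = Y ω) a * F (Y ω) a =
      ∑ ω, q ω * F (Y ω) (X ω) := by
  calc ∑ ω, q ω * ∑ a, condDist q X (fun ω' => Y ω' = Y ω) a * F (Y ω) a
      = ∑ ω, ∑ ω', q ω * (if Y ω' = Y ω then q ω' * F (Y ω') (X ω') else 0) /
          pr q (fun ω'' => Y ω'' = Y ω) := by
        simp only [sum_condDist_mul, mul_div_assoc', mul_sum, sum_div]
        refine sum_congr rfl fun ω _ => sum_congr rfl fun ω' _ => ?_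
        by_cases h : Y ω' = Y ω <;> simp [h]
    _ = ∑ ω', ∑ ω, (if Y ω = Y ω' then q ω else 0) *
          (q ω' * F (Y ω') (X ω') / pr q (fun ω'' => Y ω'' = Y ω')) := by
        rw [sum_comm]
        refine sum_congr rfl fun ω' _ => sum_congr rfl fun ω _ => ?_
        by_cases h : Y ω' = Y ω
        · rw [if_pos h, if_pos h.symm, h]
          ring
        · simp [h, Ne.symm h]
    _ = ∑ ω', q ω' * F (Y ω') (X ω') := by
        refine sum_congr rfl fun ω' _ => ?_
        rw [← sum_mul]
        change pr q (fun ω'' => Y ω'' = Y ω') * _ = _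
        rcases (hq ω').eq_or_lt with h | h
        · simp [← h]
        · exact mul_div_cancel₀ _
            (h.trans_le (le_pr hq (E := fun ω'' => Y ω'' = Y ω') rfl)).ne'

end Probability

section Divergence

variable {A : Type*} [Fintype A]

noncomputable def klDiv (f g : A → ℝ) : ℝ :=
  ∑ a, f a * log (f a / g a)

lemma sq_sqrt_sub_sqrt_le {x y : ℝ} (hx : 0 ≤ x) (hy : 0 ≤ y) (hxy : y = 0 → x = 0) :
    (√x - √y) ^ 2 ≤ x * log (x / y) - x + y := by
  rcases hy.eq_or_lt with rfl | hy
  · simp [hxy rfl]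
  rcases hx.eq_or_lt with rfl | hx
  · simp [sq_sqrt hy.le]
  obtain ⟨a, ha, rfl⟩ : ∃ a, 0 < a ∧ x = a ^ 2 := ⟨√x, sqrt_pos.2 hx, (sq_sqrt hx.le).symm⟩
  obtain ⟨b, hb, rfl⟩ : ∃ b, 0 < b ∧ y = b ^ 2 := ⟨√y, sqrt_pos.2 hy, (sq_sqrt hy.le).symm⟩
  have hlog : 1 - b / a ≤ log (a / b) := by
    simpa using one_sub_inv_le_log_of_pos (div_pos ha hb)
  have hab : a ^ 2 * (1 - b / a) = a ^ 2 - a * b := by field_simp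
  rw [sqrt_sq ha.le, sqrt_sq hb.le, ← div_pow, log_pow]
  nlinarith [mul_le_mul_of_nonneg_left hlog (sq_nonneg a)]

variable {f g : A → ℝ}

lemma sum_sq_sqrt_sub_sqrt_le_klDiv (hf : ∀ a, 0 ≤ f a) (hg : ∀ a, 0 ≤ g a)
    (hf1 : ∑ a, f a = 1) (hg1 : ∑ a, g a = 1) (hfg : ∀ a, g a = 0 → f a = 0) :
    ∑ a, (√(f a) - √(g a)) ^ 2 ≤ klDiv f g :=
  calc ∑ a, (√(f a) - √(g a)) ^ 2
      ≤ ∑ a, (f a * log (f a / g a) - f a + g a) :=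
        sum_le_sum fun a _ => sq_sqrt_sub_sqrt_le (hf a) (hg a) (hfg a)
    _ = klDiv f g := by
        rw [sum_add_distrib, sum_sub_distrib, hf1, hg1, klDiv]
        ring

lemma l1Dist_le_two_mul_sqrt_sum_sq_sqrt_sub_sqrt (hf : ∀ a, 0 ≤ f a) (hg : ∀ a, 0 ≤ g a)
    (hf1 : ∑ a, f a = 1) (hg1 : ∑ a, g a = 1) :
    l1Dist f g ≤ 2 * √(∑ a, (√(f a) - √(g a)) ^ 2) := by
  have hfactor : ∀ a, |f a - g a| = |√(f a) - √(g a)| * (√(f a) + √(g a)) := fun a => by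
    rw [← abs_of_nonneg (by positivity : 0 ≤ √(f a) + √(g a)), ← abs_mul]
    congr 1
    linear_combination sq_sqrt (hg a) - sq_sqrt (hf a)
  have hsum : ∑ a, (√(f a) + √(g a)) ^ 2 ≤ 2 ^ 2 :=
    calc ∑ a, (√(f a) + √(g a)) ^ 2
        ≤ ∑ a, 2 * (f a + g a) := sum_le_sum fun a _ => by
          nlinarith [sq_sqrt (hf a), sq_sqrt (hg a), sq_nonneg (√(f a) - √(g a))]
      _ = 2 ^ 2 := by rw [← mul_sum, sum_add_distrib, hf1, hg1]; norm_num
  calc l1Dist f g = ∑ a, |√(f a) - √(g a)| * (√(f a) + √(g a)) :=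
        sum_congr rfl fun a _ => hfactor a
    _ ≤ √(∑ a, |√(f a) - √(g a)| ^ 2) * √(∑ a, (√(f a) + √(g a)) ^ 2) :=
        sum_mul_le_sqrt_mul_sqrt _ _ _
    _ ≤ √(∑ a, (√(f a) - √(g a)) ^ 2) * 2 := by
        simp only [sq_abs]
        gcongr
        exact sqrt_le_iff.2 ⟨zero_le_two, hsum⟩
    _ = 2 * √(∑ a, (√(f a) - √(g a)) ^ 2) := mul_comm _ _

lemma klDiv_nonneg (hf : ∀ a, 0 ≤ f a) (hg : ∀ a, 0 ≤ g a)
    (hf1 : ∑ a, f a = 1) (hg1 : ∑ a, g a = 1) (hfg : ∀ a, g a = 0 → f a = 0) :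
    0 ≤ klDiv f g :=
  (sum_nonneg fun _ _ => sq_nonneg _).trans (sum_sq_sqrt_sub_sqrt_le_klDiv hf hg hf1 hg1 hfg)

/-- Pinsker's inequality, with the constant `2` in place of the optimal `√2`. -/
lemma l1Dist_le_two_mul_sqrt_klDiv (hf : ∀ a, 0 ≤ f a) (hg : ∀ a, 0 ≤ g a)
    (hf1 : ∑ a, f a = 1) (hg1 : ∑ a, g a = 1) (hfg : ∀ a, g a = 0 → f a = 0) :
    l1Dist f g ≤ 2 * √(klDiv f g) :=
  (l1Dist_le_two_mul_sqrt_sum_sq_sqrt_sub_sqrt hf hg hf1 hg1).trans <| by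
    gcongr; exact sum_sq_sqrt_sub_sqrt_le_klDiv hf hg hf1 hg1 hfg

end Divergence

section Comparison

variable {Ω A : Type*} [Fintype Ω] [Fintype A] {p q : Ω → ℝ}

lemma klDiv_condDist_nonneg (hq : ∀ ω, 0 ≤ q ω) (hqp : ∀ ω, q ω ≤ p ω)
    (X : Ω → A) (E : Ω → Prop) : 0 ≤ klDiv (condDist q X E) (condDist p X E) := by
  rcases (pr_nonneg hq E).eq_or_lt with hE | hE
  · simp [klDiv, condDist, ← hE]
  exact klDiv_nonneg (condDist_nonneg hq X E)
    (condDist_nonneg (fun ω => (hq ω).trans (hqp ω)) X E)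
    (sum_condDist q X hE.ne') (sum_condDist p X (hE.trans_le (pr_le_pr hq hqp fun _ => id)).ne')
    fun _ => condDist_eq_zero_of_condDist_eq_zero hq hqp X E

lemma l1Dist_condDist_le (hq : ∀ ω, 0 ≤ q ω) (hqp : ∀ ω, q ω ≤ p ω)
    (X : Ω → A) (E : Ω → Prop) (hE : 0 < pr q E) :
    l1Dist (condDist q X E) (condDist p X E) ≤ 2 * √(klDiv (condDist q X E) (condDist p X E)) :=
  l1Dist_le_two_mul_sqrt_klDiv (condDist_nonneg hq X E)
    (condDist_nonneg (fun ω => (hq ω).trans (hqp ω)) X E)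
    (sum_condDist q X hE.ne') (sum_condDist p X (hE.trans_le (pr_le_pr hq hqp fun _ => id)).ne')
    fun _ => condDist_eq_zero_of_condDist_eq_zero hq hqp X E

end Comparison

lemma sum_mul_sqrt_le {ι : Type*} (s : Finset ι) {w r : ι → ℝ} (hw : ∀ i, 0 ≤ w i)
    (hr : ∀ i, 0 ≤ r i) : ∑ i ∈ s, w i * √(r i) ≤ √(∑ i ∈ s, w i) * √(∑ i ∈ s, w i * r i) :=
  calc ∑ i ∈ s, w i * √(r i) = ∑ i ∈ s, √(w i) * √(w i * r i) :=
        sum_congr rfl fun i _ => by rw [sqrt_mul (hw i), ← mul_assoc, mul_self_sqrt (hw i)]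
    _ ≤ √(∑ i ∈ s, w i) * √(∑ i ∈ s, w i * r i) :=
        sum_sqrt_mul_sqrt_le s hw fun i => mul_nonneg (hw i) (hr i)

section History

variable {Ω A : Type*}

def sameHistory (X : ℕ → Ω → A) (s : ℕ) (ω : Ω) : Ω → Prop :=
  fun ω' => ∀ k, k < s → X k ω' = X k ω

lemma sameHistory_eq (X : ℕ → Ω → A) (s : ℕ) (ω : Ω) :
    sameHistory X s ω = fun ω' => (fun k : Fin s => X k ω') = fun k : Fin s => X k ω := by
  ext ω'
  simp [sameHistory, funext_iff, Fin.forall_iff]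

lemma sameHistory_succ (X : ℕ → Ω → A) (s : ℕ) (ω ω' : Ω) :
    sameHistory X (s + 1) ω ω' ↔ X s ω' = X s ω ∧ sameHistory X s ω ω' := by
  simp only [sameHistory, Nat.lt_succ_iff_lt_or_eq, or_imp, forall_and, forall_eq]
  exact and_comm

variable [Fintype Ω] {p q : Ω → ℝ}

lemma pr_sameHistory_zero (p : Ω → ℝ) (X : ℕ → Ω → A) (ω : Ω) :
    pr p (sameHistory X 0 ω) = ∑ ω, p ω := by
  simp [pr, sameHistory]

lemma condDist_sameHistory_self (p : Ω → ℝ) (X : ℕ → Ω → A) (s : ℕ) (ω : Ω) :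
    condDist p (X s) (sameHistory X s ω) (X s ω) =
      pr p (sameHistory X (s + 1) ω) / pr p (sameHistory X s ω) := by
  rw [condDist, pr_congr p fun ω' => (sameHistory_succ X s ω ω').symm]

/-- The log-ratios telescope to `log (q(history)/p(history)) - log (∑ q / ∑ p)`, and the first
term is `≤ 0` because `q ≤ p`. -/
lemma sum_log_condDist_sameHistory_le (hq : ∀ ω, 0 ≤ q ω) (hqp : ∀ ω, q ω ≤ p ω)
    (X : ℕ → Ω → A) (ℓ : ℕ) {ω : Ω} (hω : 0 < q ω) :
    ∑ s ∈ range ℓ, log (condDist q (X s) (sameHistory X s ω) (X s ω) /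
        condDist p (X s) (sameHistory X s ω) (X s ω)) ≤ log ((∑ ω, p ω) / ∑ ω, q ω) := by
  have hQ : ∀ t, 0 < pr q (sameHistory X t ω) := fun t =>
    hω.trans_le (le_pr hq fun _ _ => rfl)
  have hP : ∀ t, 0 < pr p (sameHistory X t ω) := fun t =>
    (hQ t).trans_le (pr_le_pr hq hqp fun _ => id)
  set f : ℕ → ℝ := fun t => log (pr q (sameHistory X t ω)) - log (pr p (sameHistory X t ω))
  have hstep : ∀ s, log (condDist q (X s) (sameHistory X s ω) (X s ω) /
      condDist p (X s) (sameHistory X s ω) (X s ω)) = f (s + 1) - f s := fun s => by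
    rw [condDist_sameHistory_self, condDist_sameHistory_self,
      log_div (div_pos (hQ _) (hQ _)).ne' (div_pos (hP _) (hP _)).ne',
      log_div (hQ _).ne' (hQ _).ne', log_div (hP _).ne' (hP _).ne']
    ring
  have hf_final : f ℓ ≤ 0 := sub_nonpos.2 (log_le_log (hQ ℓ) (pr_le_pr hq hqp fun _ => id))
  have hf_zero : f 0 = log (∑ ω, q ω) - log (∑ ω, p ω) := by
    simp only [f, pr_sameHistory_zero]
  rw [sum_congr rfl fun s _ => hstep s, sum_range_sub,
    log_div (by simpa only [pr_sameHistory_zero] using (hP 0).ne')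
      (by simpa only [pr_sameHistory_zero] using (hQ 0).ne')]
  linarith

variable [Fintype A]

lemma sum_mul_klDiv_condDist_sameHistory (hq : ∀ ω, 0 ≤ q ω) (p : Ω → ℝ)
    (X : ℕ → Ω → A) (s : ℕ) :
    ∑ ω, q ω * klDiv (condDist q (X s) (sameHistory X s ω))
        (condDist p (X s) (sameHistory X s ω)) =
      ∑ ω, q ω * log (condDist q (X s) (sameHistory X s ω) (X s ω) /
        condDist p (X s) (sameHistory X s ω) (X s ω)) := by
  simp only [klDiv, sameHistory_eq]
  exact sum_mul_sum_condDist_mul hq (X s) (fun ω (k : Fin s) => X k ω) fun y a =>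
    log (condDist q (X s) (fun ω' => (fun k : Fin s => X k ω') = y) a /
      condDist p (X s) (fun ω' => (fun k : Fin s => X k ω') = y) a)

lemma sum_range_sum_mul_klDiv_condDist_le (hq : ∀ ω, 0 ≤ q ω) (hqp : ∀ ω, q ω ≤ p ω)
    (X : ℕ → Ω → A) (ℓ : ℕ) :
    ∑ s ∈ range ℓ, ∑ ω, q ω * klDiv (condDist q (X s) (sameHistory X s ω))
        (condDist p (X s) (sameHistory X s ω)) ≤
      (∑ ω, q ω) * log ((∑ ω, p ω) / ∑ ω, q ω) := by
  simp only [sum_mul_klDiv_condDist_sameHistory hq]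
  rw [sum_comm, sum_mul]
  refine sum_le_sum fun ω _ => ?_
  rw [← mul_sum]
  rcases (hq ω).eq_or_lt with h | h
  · simp [← h]
  · exact mul_le_mul_of_nonneg_left (sum_log_condDist_sameHistory_le hq hqp X ℓ h) h.le

end History

theorem sum_mul_sum_l1Dist_condDist_le {Ω A : Type*} [Fintype Ω] [Fintype A] {p q : Ω → ℝ}
    (hq : ∀ ω, 0 ≤ q ω) (hqp : ∀ ω, q ω ≤ p ω) (X : ℕ → Ω → A) (ℓ : ℕ) :
    ∑ ω, q ω * ∑ s ∈ range ℓ, l1Dist (condDist q (X s) (sameHistory X s ω))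
        (condDist p (X s) (sameHistory X s ω)) ≤
      2 * (∑ ω, q ω) * √(ℓ * log ((∑ ω, p ω) / ∑ ω, q ω)) := by
  set K : ℕ → Ω → ℝ := fun s ω =>
    klDiv (condDist q (X s) (sameHistory X s ω)) (condDist p (X s) (sameHistory X s ω))
  set W := ∑ ω, q ω
  set L := log ((∑ ω, p ω) / W)
  have hK : ∀ s ω, 0 ≤ K s ω := fun s ω => klDiv_condDist_nonneg hq hqp _ _
  have hW : 0 ≤ W := sum_nonneg fun ω _ => hq ω
  have hpinsker : ∀ s ω, q ω * l1Dist (condDist q (X s) (sameHistory X s ω))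
      (condDist p (X s) (sameHistory X s ω)) ≤ 2 * (q ω * √(K s ω)) := fun s ω => by
    rcases (hq ω).eq_or_lt with h | h
    · simp [← h]
    · rw [mul_left_comm]
      exact mul_le_mul_of_nonneg_left
        (l1Dist_condDist_le hq hqp _ _ (h.trans_le (le_pr hq fun _ _ => rfl))) h.le
  calc ∑ ω, q ω * ∑ s ∈ range ℓ, l1Dist (condDist q (X s) (sameHistory X s ω))
        (condDist p (X s) (sameHistory X s ω))
      = ∑ s ∈ range ℓ, ∑ ω, q ω * l1Dist (condDist q (X s) (sameHistory X s ω))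
          (condDist p (X s) (sameHistory X s ω)) := by
        simp only [mul_sum]; exact sum_comm
    _ ≤ ∑ s ∈ range ℓ, 2 * ∑ ω, q ω * √(K s ω) := by
        gcongr with s _
        rw [mul_sum]
        exact sum_le_sum fun ω _ => hpinsker s ω
    _ ≤ ∑ s ∈ range ℓ, 2 * (√W * √(∑ ω, q ω * K s ω)) := by
        gcongr with s _
        exact sum_mul_sqrt_le _ hq (hK s)
    _ = 2 * √W * ∑ s ∈ range ℓ, 1 * √(∑ ω, q ω * K s ω) := by
        simp only [mul_sum, one_mul, mul_assoc]
    _ ≤ 2 * √W * (√(∑ s ∈ range ℓ, 1) * √(∑ s ∈ range ℓ, 1 * ∑ ω, q ω * K s ω)) := by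
        gcongr
        exact sum_mul_sqrt_le _ (fun _ => zero_le_one)
          fun s => sum_nonneg fun ω _ => mul_nonneg (hq ω) (hK s ω)
    _ ≤ 2 * √W * (√ℓ * √(W * L)) := by
        simp only [one_mul, sum_const, card_range, nsmul_eq_mul, mul_one]
        gcongr
        exact sum_range_sum_mul_klDiv_condDist_le hq hqp X ℓ
    _ = 2 * W * √(ℓ * L) := by
        rw [sqrt_mul hW, sqrt_mul (Nat.cast_nonneg ℓ)]
        linear_combination (2 * √ℓ * √L) * mul_self_sqrt hW

section HMM

variable {S A : Type*} [Fintype S] [Fintype A]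

lemma hmmWeight_nonneg (M : HMM S A) (T : ℕ) (ω : (Fin (T + 1) → S) × (Fin (T + 1) → A)) :
    0 ≤ hmmWeight M T ω :=
  mul_nonneg (mul_nonneg (M.init_nonneg _) (prod_nonneg fun _ _ => M.trans_nonneg _ _))
    (prod_nonneg fun _ _ => M.emit_nonneg _ _)

lemma sum_pi_fin_succ {β : Type*} [AddCommMonoid β] {m : ℕ} (f : (Fin (m + 1) → S) → β) :
    ∑ h, f h = ∑ a, ∑ g : Fin m → S, f (Fin.cons a g) := by
  rw [← (Fin.consEquiv fun _ => S).sum_comp, Fintype.sum_prod_type]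
  rfl

lemma sum_prod_trans_eq_one (M : HMM S A) (m : ℕ) (s : S) :
    ∑ g : Fin m → S, ∏ i : Fin m,
      M.trans ((Fin.cons s g : Fin (m + 1) → S) i.castSucc)
        ((Fin.cons s g : Fin (m + 1) → S) i.succ) = 1 := by
  induction m generalizing s with
  | zero => simp
  | succ m ih =>
    have hsplit : ∀ a (g : Fin m → S), ∏ i : Fin (m + 1),
        M.trans ((Fin.cons s (Fin.cons a g) : Fin (m + 2) → S) i.castSucc)
          ((Fin.cons s (Fin.cons a g) : Fin (m + 2) → S) i.succ) =
        M.trans s a * ∏ i : Fin m, M.trans ((Fin.cons a g : Fin (m + 1) → S) i.castSucc)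
          ((Fin.cons a g : Fin (m + 1) → S) i.succ) := fun a g => by
      simp only [Fin.prod_univ_succ, Fin.castSucc_zero, Fin.cons_zero, ← Fin.succ_castSucc,
        Fin.cons_succ]
    simp only [sum_pi_fin_succ, hsplit, ← mul_sum, ih, mul_one, M.trans_sum]

lemma sum_prod_emit_eq_one (M : HMM S A) {m : ℕ} (h : Fin m → S) :
    ∑ x : Fin m → A, ∏ i, M.emit (h i) (x i) = 1 := by
  rw [← Fintype.prod_sum fun i a => M.emit (h i) a]
  simp [M.emit_sum]

lemma pr_hid_zero (M : HMM S A) (T : ℕ) (s : S) :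
    pr (hmmWeight M T) (fun ω => hid T 0 ω = s) = M.init s := by
  simp only [pr, hid, Nat.zero_mod, Fin.zero_eta, Fintype.sum_prod_type, hmmWeight]
  rw [sum_pi_fin_succ, sum_eq_single s (fun a _ ha => by simp [ha]) (by simp)]
  simp only [Fin.cons_zero, if_true, ← mul_sum, sum_prod_emit_eq_one, mul_one,
    sum_prod_trans_eq_one]

lemma sum_hmmWeight (M : HMM S A) (T : ℕ) : ∑ ω, hmmWeight M T ω = 1 := by
  simp only [← M.init_sum, ← pr_hid_zero M T, pr]
  rw [sum_comm]
  simp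

end HMM

theorem hmm_known_state_regret_general {S A : Type*} [Fintype S] [Fintype A] (M : HMM S A)
    (c ε : ℝ)
    (hε2 : 1 / (Fintype.card S : ℝ) < ε)
    (ℓ : ℕ) (hℓ : (ℓ : ℝ) = c * Real.log (Fintype.card S) / ε ^ 2)
    (h0 : S) (hπ : 1 / (Fintype.card S : ℝ) ^ c ≤ M.init h0) :
    (∑ ω, (if hid ℓ 0 ω = h0 then hmmWeight M ℓ ω else 0) *
        ∑ s ∈ Finset.range ℓ,
          l1Dist
            (condDist (hmmWeight M ℓ) (obs ℓ s)
              (fun ω' => (∀ k, k < s → obs ℓ k ω' = obs ℓ k ω) ∧ hid ℓ 0 ω' = h0))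
            (condDist (hmmWeight M ℓ) (obs ℓ s)
              (fun ω' => ∀ k, k < s → obs ℓ k ω' = obs ℓ k ω)))
      / pr (hmmWeight M ℓ) (fun ω => hid ℓ 0 ω = h0)
      ≤ 4 * ε * (ℓ : ℝ) := by
  have hn : 0 < (Fintype.card S : ℝ) := Nat.cast_pos.2 (Fintype.card_pos_iff.2 ⟨h0⟩)
  have hε : 0 < ε := (one_div_pos.2 hn).trans hε2
  have hπ0 : 0 < M.init h0 := (one_div_pos.2 (rpow_pos_of_pos hn c)).trans_le hπ
  have hlog : log (1 / M.init h0) ≤ ℓ * ε ^ 2 := by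
    rw [hℓ, div_mul_cancel₀ _ (pow_ne_zero 2 hε.ne'), ← log_rpow hn]
    exact log_le_log (one_div_pos.2 hπ0) ((one_div_le hπ0 (rpow_pos_of_pos hn c)).2 hπ)
  have hregret := sum_mul_sum_l1Dist_condDist_le (p := hmmWeight M ℓ)
    (q := fun ω => if hid ℓ 0 ω = h0 then hmmWeight M ℓ ω else 0)
    (fun ω => by split_ifs; exacts [hmmWeight_nonneg M ℓ ω, le_rfl])
    (fun ω => by split_ifs; exacts [le_rfl, hmmWeight_nonneg M ℓ ω]) (obs ℓ) ℓ
  rw [sum_hmmWeight, show ∑ ω, _ = M.init h0 from pr_hid_zero M ℓ h0] at hregret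
  simp only [condDist_ite] at hregret
  rw [pr_hid_zero, div_le_iff₀ hπ0]
  calc _ ≤ 2 * M.init h0 * √(ℓ * log (1 / M.init h0)) := hregret
    _ ≤ 2 * M.init h0 * √((ℓ * ε) ^ 2) := by
        gcongr
        exact (mul_le_mul_of_nonneg_left hlog (Nat.cast_nonneg ℓ)).trans_eq (by ring)
    _ ≤ 4 * ε * ℓ * M.init h0 := by
        rw [sqrt_sq (by positivity)]
        nlinarith [mul_pos hε hπ0, Nat.cast_nonneg (α := ℝ) ℓ]

/-- Lemma 1: for an HMM with `n` hidden states and initial distribution `π`,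
if the true initial hidden state `h₀` has `π(h₀) ≥ 1/n^c`, then with `ℓ = c·log n / ε²`, the
expected (over the outputs, conditioned on the initial state being `h₀`) total ℓ1 distance
between `OPT_s` (the conditional distribution of `x_s` given `x_0,…,x_{s-1}` and knowledge of
`h₀`) and `M_s` (the conditional distribution of `x_s` given only `x_0,…,x_{s-1}`), summed over
`s = 0, …, ℓ-1`, is at most `4εℓ`. -/
theorem hmm_known_state_regret {S A : Type*} [Fintype S] [Fintype A] (M : HMM S A)
    (c ε : ℝ) (hc : 1 ≤ c)
    (hε1 : 1 / (Real.log (Fintype.card S)) ^ ((1 : ℝ) / 4) ≤ ε)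
    (hε2 : 1 / (Fintype.card S : ℝ) < ε)
    (ℓ : ℕ) (hℓ : (ℓ : ℝ) = c * Real.log (Fintype.card S) / ε ^ 2)
    (h0 : S) (hπ : 1 / (Fintype.card S : ℝ) ^ c ≤ M.init h0) :
    (∑ ω, (if hid ℓ 0 ω = h0 then hmmWeight M ℓ ω else 0) *
        ∑ s ∈ Finset.range ℓ,
          l1Dist
            (condDist (hmmWeight M ℓ) (obs ℓ s)
              (fun ω' => (∀ k, k < s → obs ℓ k ω' = obs ℓ k ω) ∧ hid ℓ 0 ω' = h0))
            (condDist (hmmWeight M ℓ) (obs ℓ s)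
              (fun ω' => ∀ k, k < s → obs ℓ k ω' = obs ℓ k ω)))
      / pr (hmmWeight M ℓ) (fun ω => hid ℓ 0 ω = h0)
      ≤ 4 * ε * (ℓ : ℝ) :=
  hmm_known_state_regret_general M c ε hε2 ℓ hℓ h0 hπ
end

section
/- (Modified Pinsker's inequality.) For any two probability distributions μ and ν on a finite set X with ν(x) > 0 for all x, and any constant C with log C ≥ 8 (natural logarithm), define the C-truncated KL divergence D̃_C(μ‖ν) = Σ_{x∈X} μ(x) · log( min{ μ(x)/ν(x), C } ). Then D̃_C(μ‖ν) ≥ (1/2) · ‖μ − ν‖₁², where ‖μ−ν‖₁ = Σ_{x∈X} |μ(x)−ν(x)|. -/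
/-!
Pointwise, `a log (a/b) + b - a ≥ 3(a-b)² / (2(a+2b))` (with `t = a/b` this is the convexity of
`t log t - t + 1 - 3(t-1)²/(2(t+2))`, which vanishes together with its derivative at `t = 1`).
Where the truncation at `C` is active, `log C ≥ 5/2` is already enough for the same bound.
Summing, and applying Cauchy–Schwarz with the probability weights `(μ + 2ν)/3`, gives
`½‖μ - ν‖₁² ≤ Σ 3(μ-ν)²/(2(μ+2ν)) ≤ D̃_C(μ‖ν)`.
-/

open Finset Real

noncomputable def pinskerGap (t : ℝ) : ℝ :=
  t * log t - t + 1 - 3 * (t - 1) ^ 2 / (2 * (t + 2))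

noncomputable def pinskerGapDeriv (t : ℝ) : ℝ :=
  log t - 3 * (t - 1) * (t + 5) / (2 * (t + 2) ^ 2)

lemma hasDerivAt_pinskerGap {t : ℝ} (ht : 0 < t) :
    HasDerivAt pinskerGap (pinskerGapDeriv t) t := by
  have hquot : HasDerivAt (fun s : ℝ => 3 * (s - 1) ^ 2 / (2 * (s + 2)))
      ((3 * (2 * (t - 1)) * (2 * (t + 2)) - 3 * (t - 1) ^ 2 * 2) / (2 * (t + 2)) ^ 2) t := by
    refine HasDerivAt.div ?_ ?_ (by positivity)
    · simpa using (((hasDerivAt_id t).sub_const 1).pow 2).const_mul (3 : ℝ)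
    · simpa using ((hasDerivAt_id t).add_const 2).const_mul (2 : ℝ)
  refine ((((hasDerivAt_mul_log ht.ne').sub (hasDerivAt_id t)).add_const 1).sub hquot).congr_deriv ?_
  have : t + 2 ≠ 0 := by positivity
  unfold pinskerGapDeriv
  field_simp
  ring

lemma hasDerivAt_pinskerGapDeriv {t : ℝ} (ht : 0 < t) :
    HasDerivAt pinskerGapDeriv (t⁻¹ - 27 / (t + 2) ^ 3) t := by
  have hquot : HasDerivAt (fun s : ℝ => 3 * (s - 1) * (s + 5) / (2 * (s + 2) ^ 2))
      (((3 * (t + 5) + 3 * (t - 1)) * (2 * (t + 2) ^ 2) - 3 * (t - 1) * (t + 5) * (2 * (2 * (t + 2))))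
        / (2 * (t + 2) ^ 2) ^ 2) t := by
    refine HasDerivAt.div ?_ ?_ (by positivity)
    · simpa using
        (((hasDerivAt_id t).sub_const 1).const_mul (3 : ℝ)).fun_mul ((hasDerivAt_id t).add_const 5)
    · simpa using (((hasDerivAt_id t).add_const 2).pow 2).const_mul (2 : ℝ)
  refine ((hasDerivAt_log ht.ne').sub hquot).congr_deriv ?_
  have : t + 2 ≠ 0 := by positivity
  field_simp
  ring

lemma convexOn_pinskerGap : ConvexOn ℝ (Set.Ioi 0) pinskerGap := by
  refine convexOn_of_hasDerivWithinAt2_nonneg (convex_Ioi 0)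
    (fun t ht => (hasDerivAt_pinskerGap ht).continuousAt.continuousWithinAt)
    (fun t ht => (hasDerivAt_pinskerGap (interior_subset ht)).hasDerivWithinAt)
    (fun t ht => (hasDerivAt_pinskerGapDeriv (interior_subset ht)).hasDerivWithinAt) ?_
  intro t ht
  have ht : 0 < t := interior_subset ht
  -- `(t + 2)³ ≥ 27 t` is AM-GM for `t, 1, 1`
  rw [sub_nonneg, div_le_iff₀ (by positivity), inv_mul_eq_div, le_div_iff₀ ht]
  nlinarith [mul_nonneg ht.le (sq_nonneg (t - 1)), sq_nonneg (t - 1)]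

lemma pinskerGap_nonneg {t : ℝ} (ht : 0 < t) : 0 ≤ pinskerGap t := by
  have hderiv : derivWithin pinskerGap (Set.Ioi 1) 1 = 0 := by
    rw [(hasDerivAt_pinskerGap one_pos).hasDerivWithinAt.derivWithin (uniqueDiffWithinAt_Ioi 1)]
    simp [pinskerGapDeriv]
  have hmin := convexOn_pinskerGap.isMinOn_of_rightDeriv_eq_zero
    (by rw [interior_Ioi]; exact Set.mem_Ioi.2 one_pos) hderiv ht
  simpa [pinskerGap] using hmin

lemma three_mul_sq_sub_one_div_le_mul_log {t : ℝ} (ht : 0 ≤ t) :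
    3 * (t - 1) ^ 2 / (2 * (t + 2)) ≤ t * log t - t + 1 := by
  rcases ht.eq_or_lt with rfl | ht
  · norm_num
  · have := pinskerGap_nonneg ht
    rw [pinskerGap] at this
    linarith

lemma three_mul_sq_sub_div_le_mul_log_div {a b : ℝ} (ha : 0 ≤ a) (hb : 0 < b) :
    3 * (a - b) ^ 2 / (2 * (a + 2 * b)) ≤ a * log (a / b) + b - a := by
  have key := mul_le_mul_of_nonneg_left
    (three_mul_sq_sub_one_div_le_mul_log (div_nonneg ha hb.le)) hb.le
  have : a + 2 * b ≠ 0 := by positivity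
  calc 3 * (a - b) ^ 2 / (2 * (a + 2 * b))
      = b * (3 * (a / b - 1) ^ 2 / (2 * (a / b + 2))) := by field_simp
    _ ≤ b * (a / b * log (a / b) - a / b + 1) := key
    _ = a * log (a / b) + b - a := by field_simp; ring

lemma three_mul_sq_sub_div_le_mul_add {a b L : ℝ} (ha : 0 ≤ a) (hb : 0 < b) (hL : 5 / 2 ≤ L) :
    3 * (a - b) ^ 2 / (2 * (a + 2 * b)) ≤ a * L + b - a := by
  rw [div_le_iff₀ (by positivity)]
  nlinarith [mul_nonneg ha hb.le, mul_le_mul_of_nonneg_left hL ha]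

lemma three_mul_sq_sub_div_le_mul_log_min {a b C : ℝ} (ha : 0 ≤ a) (hb : 0 < b)
    (hC : 5 / 2 ≤ log C) :
    3 * (a - b) ^ 2 / (2 * (a + 2 * b)) ≤ a * log (min (a / b) C) + b - a := by
  rcases le_total (a / b) C with h | h
  · rw [min_eq_left h]
    exact three_mul_sq_sub_div_le_mul_log_div ha hb
  · rw [min_eq_right h]
    exact three_mul_sq_sub_div_le_mul_add ha hb hC

lemma half_sq_sum_abs_sub_le {X : Type*} [Fintype X] (μ ν : X → ℝ) (hμ1 : ∑ x, μ x = 1)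
    (hν1 : ∑ x, ν x = 1) (hpos : ∀ x, 0 < μ x + 2 * ν x) :
    1 / 2 * (∑ x, |μ x - ν x|) ^ 2 ≤ ∑ x, 3 * (μ x - ν x) ^ 2 / (2 * (μ x + 2 * ν x)) := by
  have hw : ∑ x, (μ x + 2 * ν x) / 3 = 1 := by
    rw [← sum_div, sum_add_distrib, hμ1, ← mul_sum, hν1]
    norm_num
  have hcs := sq_sum_div_le_sum_sq_div univ (fun x => |μ x - ν x|)
    (fun x _ => div_pos (hpos x) three_pos)
  rw [hw, div_one] at hcs
  calc 1 / 2 * (∑ x, |μ x - ν x|) ^ 2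
      ≤ 1 / 2 * ∑ x, |μ x - ν x| ^ 2 / ((μ x + 2 * ν x) / 3) := by gcongr
    _ = ∑ x, 3 * (μ x - ν x) ^ 2 / (2 * (μ x + 2 * ν x)) := by
      rw [mul_sum]
      refine sum_congr rfl fun x _ => ?_
      have := (hpos x).ne'
      rw [sq_abs]
      field_simp

/-- Modified Pinsker's inequality: for probability distributions `μ, ν` on a
finite set with `ν` strictly positive, and any `C` with `log C ≥ 8`, the `C`-truncated KL
divergence `D̃_C(μ‖ν) = Σ_x μ(x)·log(min{μ(x)/ν(x), C})` satisfies
`D̃_C(μ‖ν) ≥ (1/2)·‖μ−ν‖₁²`. -/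
theorem modified_pinsker {X : Type*} [Fintype X]
    (μ ν : X → ℝ) (hμ0 : ∀ x, 0 ≤ μ x) (hμ1 : ∑ x, μ x = 1)
    (hν0 : ∀ x, 0 < ν x) (hν1 : ∑ x, ν x = 1)
    (C : ℝ) (hC : 8 ≤ Real.log C) :
    (1 / 2) * (∑ x, |μ x - ν x|) ^ 2
      ≤ ∑ x, μ x * Real.log (min (μ x / ν x) C) := by
  have hpos : ∀ x, 0 < μ x + 2 * ν x := fun x => by linarith [hμ0 x, hν0 x]
  calc (1 / 2) * (∑ x, |μ x - ν x|) ^ 2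
      ≤ ∑ x, 3 * (μ x - ν x) ^ 2 / (2 * (μ x + 2 * ν x)) :=
        half_sq_sum_abs_sub_le μ ν hμ1 hν1 hpos
    _ ≤ ∑ x, (μ x * Real.log (min (μ x / ν x) C) + ν x - μ x) :=
        sum_le_sum fun x _ => three_mul_sq_sub_div_le_mul_log_min (hμ0 x) (hν0 x) (by linarith)
    _ = ∑ x, μ x * Real.log (min (μ x / ν x) C) := by
        rw [sum_sub_distrib, sum_add_distrib, hν1, hμ1]
        ring
end

section
/- For every pair of real numbers p, q with 0 ≤ q ≤ p ≤ 1 (and q < 1), the inequality 3p + (1−p)·log( (1−p)/(1−q) ) ≥ 2(p−q)² holds, where log is the natural logarithm and the convention 0·log 0 = 0 is used when p = 1. -/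
open Real

theorem Real.sub_le_mul_log_div {a b : ℝ} (ha : 0 ≤ a) (hb : 0 < b) :
    a - b ≤ a * log (a / b) := by
  rcases ha.eq_or_lt with rfl | ha
  · simpa using hb.le
  calc a - b = a * (1 - (a / b)⁻¹) := by field_simp
    _ ≤ a * log (a / b) := by gcongr; exact one_sub_inv_le_log_of_pos (by positivity)

/-- for all `0 ≤ q ≤ p ≤ 1` with `q < 1`, we have
`3p + (1−p)·log((1−p)/(1−q)) ≥ 2(p−q)²` (natural log; for `p = 1` the second summand is `0`,
matching the convention `0·log 0 = 0`). -/
theorem three_p_inequality (p q : ℝ) (hq0 : 0 ≤ q) (hqp : q ≤ p) (hp1 : p ≤ 1) (hq1 : q < 1) :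
    2 * (p - q) ^ 2 ≤ 3 * p + (1 - p) * Real.log ((1 - p) / (1 - q)) := by
  have hsq : (p - q) ^ 2 ≤ p - q := by nlinarith
  calc 2 * (p - q) ^ 2 ≤ 3 * p + ((1 - p) - (1 - q)) := by linarith
    _ ≤ 3 * p + (1 - p) * Real.log ((1 - p) / (1 - q)) := by
      gcongr
      exact sub_le_mul_log_div (by linarith) (by linarith)
end
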